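/- If R is a commutative ring of Bass stable rank 1, then every matrix in Sp_{2n}(R) is connected to the identity through a path in Sp_{2n}(R) when R is additionally a Banach algebra; in particular, for R = O(X) the holomorphic functions on an open Riemann surface, every M ∈ Sp_{2n}(O(X)) is null-homotopic. -/

import Mathlib

open Matrix

/-- Index type for `2n × 2n` block matrices. -/
abbrev Idx (n : ℕ) := Fin n ⊕ Fin n

/-- The standard symplectic form matrix `J = [[0, I], [-I, 0]]`. -/
def Jmat (R : Type*) [CommRing R] (n : ℕ) : Matrix (Idx n) (Idx n) R :=
  Matrix.fromBlocks 0 1 (-1) 0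

/-- A `2n × 2n` matrix is symplectic if `Mᵀ J M = J`. -/
def IsSymplectic {R : Type*} [CommRing R] {n : ℕ} (M : Matrix (Idx n) (Idx n) R) : Prop :=
  Mᵀ * Jmat R n * M = Jmat R n

/-- The symmetric `n × n` matrix with `a` in entries `(i,j)` and `(j,i)` and zeros elsewhere. -/
def Smat {R : Type*} [CommRing R] {n : ℕ} (i j : Fin n) (a : R) : Matrix (Fin n) (Fin n) R :=
  Matrix.of fun k l => if (k = i ∧ l = j) ∨ (k = j ∧ l = i) then a else 0

/-- The elementary symplectic matrix `E_{ij}(a) = [[I, S],[0, I]]`. -/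
def Emat {R : Type*} [CommRing R] {n : ℕ} (i j : Fin n) (a : R) : Matrix (Idx n) (Idx n) R :=
  Matrix.fromBlocks 1 (Smat i j a) 0 1

/-- The elementary symplectic matrix `F_{ij}(a) = [[I, 0],[S, I]]`. -/
def Fmat {R : Type*} [CommRing R] {n : ℕ} (i j : Fin n) (a : R) : Matrix (Idx n) (Idx n) R :=
  Matrix.fromBlocks 1 0 (Smat i j a) 1

/-- The matrix `K_{ij}(a) = [[I + a e_{ij}, 0],[0, I - a e_{ji}]]` for `i ≠ j`. -/
def Kmat {R : Type*} [CommRing R] {n : ℕ} (i j : Fin n) (a : R) :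
    Matrix (Idx n) (Idx n) R :=
  Matrix.fromBlocks (1 + Matrix.single i j a) 0 0 (1 - Matrix.single j i a)

/-- An elementary symplectic matrix: `[[I,B],[0,I]]` or `[[I,0],[C,I]]` with symmetric block. -/
def IsElemSymp {R : Type*} [CommRing R] {n : ℕ} (M : Matrix (Idx n) (Idx n) R) : Prop :=
  ∃ B : Matrix (Fin n) (Fin n) R, Bᵀ = B ∧
    (M = Matrix.fromBlocks 1 B 0 1 ∨ M = Matrix.fromBlocks 1 0 B 1)

/-!
Write `M = [[A, B], [C, D]]`. Stable rank one gives a symmetric `Y` with `A + Y C` invertible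
(by induction on the size, pivoting on the last diagonal entry of `A`), so after multiplying by
the elementary matrix `[[1, Y], [0, 1]]` we may assume `A` invertible. Then
`M = [[1, 0], [C A⁻¹, 1]] · diag(A, A⁻ᵀ) · [[1, A⁻¹ B], [0, 1]]` with symmetric off-diagonal
blocks, and elementary symplectic matrices are joined to `1` by scaling their block. By stable
rank one again, every invertible `A` is a product of square-zero unipotents `1 + N`, for which
`diag(1 + N, 1 - Nᵀ)` is joined to `1` by scaling `N`, and of symmetric invertibles `Δ`, for which
`diag(Δ, Δ⁻¹)` is a product of six elementary symplectic matrices (Whitehead's trick).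
-/

def HasStableRankOne (R : Type*) [CommRing R] : Prop :=
  ∀ x₁ x₂ : R, (∃ r s : R, r * x₁ + s * x₂ = 1) → ∃ y : R, IsUnit (x₁ + y * x₂)

namespace Submonoid

variable {M : Type*} [Monoid M] [TopologicalSpace M] [ContinuousMul M] (S : Submonoid M)

def pathComponentInOne : Submonoid M where
  carrier := pathComponentIn S 1
  mul_mem' {a b} ha hb := by
    have h := (ha.mul hb).mono S.coe_mul_self_eq.le
    rwa [one_mul] at h
  one_mem' := mem_pathComponentIn_self S.one_mem

variable {S}

theorem mem_pathComponentInOne_of_continuous {X : Type*} [TopologicalSpace X]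
    [PathConnectedSpace X] {f : X → M} (hf : Continuous f) (hfS : ∀ x, f x ∈ S) {x₀ : X}
    (hx₀ : f x₀ = 1) (x : X) : f x ∈ S.pathComponentInOne := by
  have h := (joinedIn_univ.mpr (PathConnectedSpace.joined x₀ x)).map hf
  rw [hx₀] at h
  exact h.mono (by rintro _ ⟨y, -, rfl⟩; exact hfS y)

end Submonoid

theorem MonoidHom.apply_mem_closure_of_mapsTo {M N : Type*} [Monoid M] [Monoid N] (f : M →* N)
    {S : Set M} {T : Set N} (hST : Set.MapsTo f S T) {x : M} (hx : x ∈ Submonoid.closure S) :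
    f x ∈ Submonoid.closure T :=
  (Submonoid.closure_le (S := (Submonoid.closure T).comap f).mpr
    fun _ hs ↦ Submonoid.subset_closure (hST hs)) hx

namespace Matrix

theorem fromBlocks_sub {l m n o α : Type*} [AddGroup α] (A A' : Matrix n l α) (B B' : Matrix n m α)
    (C C' : Matrix o l α) (D D' : Matrix o m α) :
    fromBlocks A B C D - fromBlocks A' B' C' D' =
      fromBlocks (A - A') (B - B') (C - C') (D - D') := by
  simp [sub_eq_add_neg, fromBlocks_neg, fromBlocks_add]

theorem transpose_eq_self_of_unique {κ α : Type*} [Unique κ] (d : Matrix κ κ α) : dᵀ = d := by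
  ext i j
  rw [Subsingleton.elim i j, transpose_apply]

variable {ι κ R : Type*} [Fintype ι] [DecidableEq ι] [Fintype κ] [DecidableEq κ] [CommRing R]

theorem isUnit_iff_isUnit_apply_default [Unique κ] (d : Matrix κ κ R) :
    IsUnit d ↔ IsUnit (d default default) := by
  rw [isUnit_iff_isUnit_det, det_unique]

theorem _root_.HasStableRankOne.exists_isUnit_add_mul_of_unique [Unique κ]
    (hR : HasStableRankOne R) {x₁ x₂ : Matrix κ κ R} (h : ∃ r s, r * x₁ + s * x₂ = 1) :
    ∃ y, IsUnit (x₁ + y * x₂) := by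
  obtain ⟨r, s, hrs⟩ := h
  have hentry := congr_fun₂ hrs default default
  simp only [add_apply, mul_apply, Finset.univ_unique, Finset.sum_singleton, one_apply_eq] at hentry
  obtain ⟨y, hy⟩ := hR _ _ ⟨_, _, hentry⟩
  refine ⟨diagonal fun _ ↦ y, ?_⟩
  rw [isUnit_iff_isUnit_apply_default]
  simpa [mul_apply] using hy

variable (ι R) in
def unipotentsAndSymmetricUnits : Set (Matrix ι ι R) :=
  {A | (A - 1) * (A - 1) = 0} ∪ {A | IsUnit A ∧ Aᵀ = A}

variable (ι κ R) in
def fromBlocksOneHom : Matrix ι ι R →* Matrix (ι ⊕ κ) (ι ⊕ κ) R where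
  toFun A := fromBlocks A 0 0 1
  map_one' := fromBlocks_one
  map_mul' A B := by simp [fromBlocks_multiply]

theorem fromBlocks_one_one_mem_unipotentsAndSymmetricUnits (B : Matrix ι κ R) :
    fromBlocks 1 B 0 1 ∈ unipotentsAndSymmetricUnits (ι ⊕ κ) R :=
  Or.inl <| by simp [← fromBlocks_one, fromBlocks_sub, fromBlocks_multiply]

theorem fromBlocks_one_zero_mem_unipotentsAndSymmetricUnits (C : Matrix κ ι R) :
    fromBlocks 1 0 C 1 ∈ unipotentsAndSymmetricUnits (ι ⊕ κ) R :=
  Or.inl <| by simp [← fromBlocks_one, fromBlocks_sub, fromBlocks_multiply]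

theorem fromBlocks_one_mem_unipotentsAndSymmetricUnits [Unique κ] {D : Matrix κ κ R}
    (hD : IsUnit D) : fromBlocks 1 0 0 D ∈ unipotentsAndSymmetricUnits (ι ⊕ κ) R := by
  refine Or.inr ⟨?_, by rw [fromBlocks_transpose, transpose_eq_self_of_unique D]; simp⟩
  rw [isUnit_iff_isUnit_det, det_fromBlocks_zero₂₁, det_one, one_mul]
  exact (isUnit_iff_isUnit_det D).mp hD

theorem mapsTo_fromBlocksOneHom_unipotentsAndSymmetricUnits :
    Set.MapsTo (fromBlocksOneHom ι κ R) (unipotentsAndSymmetricUnits ι R)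
      (unipotentsAndSymmetricUnits (ι ⊕ κ) R) := by
  rintro A (hA | ⟨hA, hAt⟩)
  · left
    simp [fromBlocksOneHom, ← fromBlocks_one, fromBlocks_sub, fromBlocks_multiply,
      show (A - 1) * (A - 1) = 0 from hA]
  · right
    refine ⟨?_, by simp [fromBlocksOneHom, fromBlocks_transpose, hAt]⟩
    simpa [fromBlocksOneHom, isUnit_iff_isUnit_det, det_fromBlocks_zero₂₁] using hA

theorem mapsTo_reindex_unipotentsAndSymmetricUnits (e : ι ≃ κ) :
    Set.MapsTo (reindexRingEquiv R e).toMonoidHom (unipotentsAndSymmetricUnits ι R)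
      (unipotentsAndSymmetricUnits κ R) := by
  rintro A (hA | ⟨hA, hAt⟩)
  · left
    change (reindexRingEquiv R e A - 1) * (reindexRingEquiv R e A - 1) = 0
    rw [← map_one (reindexRingEquiv R e), ← map_sub, ← map_mul, hA, map_zero]
  · exact Or.inr ⟨hA.map _, by simp [hAt]⟩

theorem exists_isUnit_mul_add_of_isUnit_fromBlocks [Unique κ] (hR : HasStableRankOne R)
    {A : Matrix ι ι R} {B : Matrix ι κ R} {C : Matrix κ ι R} {D : Matrix κ κ R}
    (h : IsUnit (fromBlocks A B C D)) : ∃ X : Matrix κ ι R, IsUnit (X * B + D) := by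
  obtain ⟨N, hN⟩ := h.exists_left_inv
  rw [← fromBlocks_toBlocks N, fromBlocks_multiply, ← fromBlocks_one, fromBlocks_inj] at hN
  obtain ⟨y, hy⟩ := hR.exists_isUnit_add_mul_of_unique
    ⟨N.toBlocks₂₂, 1, by rw [one_mul, add_comm, hN.2.2.2]⟩
  refine ⟨y * N.toBlocks₂₁, ?_⟩
  rwa [add_comm, Matrix.mul_assoc]

theorem mem_closure_of_isUnit_sum [Unique κ] (hR : HasStableRankOne R)
    (ih : ∀ A : Matrix ι ι R, IsUnit A → A ∈ Submonoid.closure (unipotentsAndSymmetricUnits ι R))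
    {M : Matrix (ι ⊕ κ) (ι ⊕ κ) R} (hM : IsUnit M) :
    M ∈ Submonoid.closure (unipotentsAndSymmetricUnits (ι ⊕ κ) R) := by
  obtain ⟨A, B, C, D, rfl⟩ : ∃ A B C D, M = fromBlocks A B C D :=
    ⟨_, _, _, _, (fromBlocks_toBlocks M).symm⟩
  obtain ⟨X, hX⟩ := exists_isUnit_mul_add_of_isUnit_fromBlocks hR hM
  let := hX.invertible
  have hcancel : fromBlocks 1 0 (-X) 1 * fromBlocks 1 0 X 1 = (1 : Matrix (ι ⊕ κ) (ι ⊕ κ) R) := by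
    simp [fromBlocks_multiply]
  have hpivot : fromBlocks 1 0 X 1 * fromBlocks A B C D =
      fromBlocks A B (X * A + C) (X * B + D) := by
    simp [fromBlocks_multiply]
  have hschur : IsUnit (A - B * ⅟(X * B + D) * (X * A + C)) := by
    have hL : IsUnit (fromBlocks 1 0 X 1 : Matrix (ι ⊕ κ) (ι ⊕ κ) R) := by
      simp [isUnit_iff_isUnit_det]
    have h := hL.mul hM
    rw [hpivot, isUnit_iff_isUnit_det, det_fromBlocks₂₂] at h
    exact (isUnit_iff_isUnit_det _).mpr (isUnit_of_mul_isUnit_right h)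
  have hsplit : fromBlocks (A - B * ⅟(X * B + D) * (X * A + C)) 0 0 (X * B + D) =
      fromBlocksOneHom ι κ R (A - B * ⅟(X * B + D) * (X * A + C)) *
        fromBlocks 1 0 0 (X * B + D) := by
    simp [fromBlocksOneHom, fromBlocks_multiply]
  rw [← one_mul (fromBlocks A B C D), ← hcancel, mul_assoc, hpivot,
    fromBlocks_eq_of_invertible₂₂ A B (X * A + C) (X * B + D), hsplit]
  refine mul_mem (Submonoid.subset_closure (fromBlocks_one_zero_mem_unipotentsAndSymmetricUnits _))
    (mul_mem (mul_mem
      (Submonoid.subset_closure (fromBlocks_one_one_mem_unipotentsAndSymmetricUnits _))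
      (mul_mem ?_ (Submonoid.subset_closure (fromBlocks_one_mem_unipotentsAndSymmetricUnits hX))))
      (Submonoid.subset_closure (fromBlocks_one_zero_mem_unipotentsAndSymmetricUnits _)))
  exact (fromBlocksOneHom ι κ R).apply_mem_closure_of_mapsTo
    mapsTo_fromBlocksOneHom_unipotentsAndSymmetricUnits (ih _ hschur)

theorem mem_closure_of_isUnit_reindex (e : ι ≃ κ)
    (h : ∀ A : Matrix ι ι R, IsUnit A → A ∈ Submonoid.closure (unipotentsAndSymmetricUnits ι R))
    {A : Matrix κ κ R} (hA : IsUnit A) :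
    A ∈ Submonoid.closure (unipotentsAndSymmetricUnits κ R) := by
  simpa using (reindexRingEquiv R e).toMonoidHom.apply_mem_closure_of_mapsTo
    (mapsTo_reindex_unipotentsAndSymmetricUnits e) (h _ (hA.map (reindexRingEquiv R e.symm)))

theorem mem_closure_unipotentsAndSymmetricUnits_of_isUnit (hR : HasStableRankOne R)
    {A : Matrix ι ι R} (hA : IsUnit A) :
    A ∈ Submonoid.closure (unipotentsAndSymmetricUnits ι R) := by
  suffices hfin : ∀ n, ∀ A : Matrix (Fin n) (Fin n) R, IsUnit A →
      A ∈ Submonoid.closure (unipotentsAndSymmetricUnits (Fin n) R) from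
    mem_closure_of_isUnit_reindex (Fintype.equivFin ι).symm (hfin _) hA
  intro n
  induction n with
  | zero => exact fun A _ ↦ Subsingleton.elim A 1 ▸ one_mem _
  | succ n ih =>
    exact fun A hA ↦ mem_closure_of_isUnit_reindex
      ((Equiv.sumCongr (Equiv.refl _) finOneEquiv.symm).trans finSumFinEquiv)
      (fun A hA ↦ mem_closure_of_isUnit_sum (κ := Unit) hR ih hA) hA

def IsLagrangianPair (A C : Matrix ι ι R) : Prop :=
  Aᵀ * C = Cᵀ * A ∧ ∃ P Q : Matrix ι ι R, P * A + Q * C = 1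

theorem IsLagrangianPair.add_mul {A C Y : Matrix ι ι R} (h : IsLagrangianPair A C)
    (hY : Yᵀ = Y) : IsLagrangianPair (A + Y * C) C := by
  obtain ⟨hAC, P, Q, hPQ⟩ := h
  refine ⟨?_, P, Q - P * Y, ?_⟩
  · rw [transpose_add, transpose_mul, hY, _root_.add_mul, mul_add, hAC, mul_assoc]
  · rw [← hPQ]; noncomm_ring

theorem IsLagrangianPair.mul {A C U U' V V' : Matrix ι ι R} (h : IsLagrangianPair A C)
    (hU : U' * U = 1) (hV : V * V' = 1) : IsLagrangianPair (U * A * V) (U'ᵀ * C * V) := by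
  obtain ⟨hAC, P, Q, hPQ⟩ := h
  have hUt : Uᵀ * U'ᵀ = 1 := by rw [← transpose_mul, hU, transpose_one]
  refine ⟨?_, V' * P * U', V' * Q * Uᵀ, ?_⟩
  · calc (U * A * V)ᵀ * (U'ᵀ * C * V) = Vᵀ * (Aᵀ * (Uᵀ * U'ᵀ) * C) * V := by
          simp only [transpose_mul, mul_assoc]
      _ = Vᵀ * (Cᵀ * (U' * U) * A) * V := by rw [hUt, hU, mul_one, mul_one, hAC]
      _ = (U'ᵀ * C * V)ᵀ * (U * A * V) := by
          simp only [transpose_mul, transpose_transpose, mul_assoc]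
  · calc V' * P * U' * (U * A * V) + V' * Q * Uᵀ * (U'ᵀ * C * V)
        = V' * (P * (U' * U) * A + Q * (Uᵀ * U'ᵀ) * C) * V := by noncomm_ring
      _ = 1 := by rw [hU, hUt, mul_one, mul_one, hPQ, mul_one, mul_eq_one_comm.mp hV]

theorem exists_symm_isUnit_of_add_mul {A C Y₀ : Matrix ι ι R} (hY₀ : Y₀ᵀ = Y₀)
    (h : ∃ Y, Yᵀ = Y ∧ IsUnit (A + Y₀ * C + Y * C)) : ∃ Y, Yᵀ = Y ∧ IsUnit (A + Y * C) := by
  obtain ⟨Y, hY, hunit⟩ := h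
  exact ⟨Y₀ + Y, by rw [transpose_add, hY₀, hY], by rwa [_root_.add_mul, ← add_assoc]⟩

theorem exists_symm_isUnit_of_mul {A C U U' V V' : Matrix ι ι R} (hU : U' * U = 1)
    (hV : V * V' = 1) (h : ∃ Y, Yᵀ = Y ∧ IsUnit (U * A * V + Y * (U'ᵀ * C * V))) :
    ∃ Y, Yᵀ = Y ∧ IsUnit (A + Y * C) := by
  obtain ⟨Y, hY, hunit⟩ := h
  refine ⟨U' * Y * U'ᵀ, ?_, ?_⟩
  · rw [transpose_mul, transpose_mul, transpose_transpose, hY, mul_assoc]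
  convert ((IsUnit.of_mul_eq_one U hU).mul hunit).mul (IsUnit.of_mul_eq_one_right V hV) using 1
  calc A + U' * Y * U'ᵀ * C = (U' * U) * A * (V * V') + U' * Y * (U'ᵀ * C * (V * V')) := by
        rw [hU, hV]; noncomm_ring
    _ = U' * (U * A * V + Y * (U'ᵀ * C * V)) * V' := by noncomm_ring

theorem exists_symm_isUnit_of_fromBlocks_zero_zero
    (ih : ∀ A C : Matrix ι ι R, IsLagrangianPair A C → ∃ Y, Yᵀ = Y ∧ IsUnit (A + Y * C))
    {A : Matrix ι ι R} {D : Matrix κ κ R} (hD : IsUnit D) {C : Matrix (ι ⊕ κ) (ι ⊕ κ) R}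
    (h : IsLagrangianPair (fromBlocks A 0 0 D) C) :
    ∃ Y, Yᵀ = Y ∧ IsUnit (fromBlocks A 0 0 D + Y * C) := by
  obtain ⟨C₁, C₂, C₃, C₄, rfl⟩ : ∃ C₁ C₂ C₃ C₄, C = fromBlocks C₁ C₂ C₃ C₄ :=
    ⟨_, _, _, _, (fromBlocks_toBlocks C).symm⟩
  obtain ⟨hAC, P, Q, hPQ⟩ := h
  simp only [fromBlocks_transpose, fromBlocks_multiply, fromBlocks_inj] at hAC
  simp only [transpose_zero, Matrix.zero_mul, Matrix.mul_zero, add_zero, zero_add] at hAC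
  obtain ⟨hAC₁, -, hAC₃, -⟩ := hAC
  -- The Lagrangian condition expresses `C₃` through `A`, which makes `(A, C₁)` unimodular.
  obtain ⟨W, hW⟩ := ((isUnit_transpose D).mpr hD).exists_left_inv
  have hC₃ : C₃ = W * C₂ᵀ * A := by
    rw [Matrix.mul_assoc, ← hAC₃, ← Matrix.mul_assoc, hW, Matrix.one_mul]
  rw [← fromBlocks_toBlocks P, ← fromBlocks_toBlocks Q, fromBlocks_multiply, fromBlocks_multiply,
    fromBlocks_add, ← fromBlocks_one, fromBlocks_inj, hC₃] at hPQ
  obtain ⟨Y, hY, hunit⟩ := ih A C₁ ⟨hAC₁, P.toBlocks₁₁ + Q.toBlocks₁₂ * W * C₂ᵀ, Q.toBlocks₁₁, by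
    rw [← hPQ.1]; simp only [Matrix.mul_zero, add_zero, Matrix.add_mul, Matrix.mul_assoc]; abel⟩
  refine ⟨fromBlocks Y 0 0 0, by simp [fromBlocks_transpose, hY], ?_⟩
  rw [fromBlocks_multiply, fromBlocks_add]
  simpa [isUnit_iff_isUnit_det, det_fromBlocks_zero₂₁] using
    ((isUnit_iff_isUnit_det _).mp hunit).mul ((isUnit_iff_isUnit_det _).mp hD)

theorem IsLagrangianPair.exists_isUnit_toBlocks₂₂ [Unique κ] (hR : HasStableRankOne R)
    {A C : Matrix (ι ⊕ κ) (ι ⊕ κ) R} (h : IsLagrangianPair A C) :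
    ∃ (Y₀ : Matrix (ι ⊕ κ) (ι ⊕ κ) R) (X : Matrix κ ι R), Y₀ᵀ = Y₀ ∧
      IsUnit (fromBlocks 1 0 X 1 * (A + Y₀ * C)).toBlocks₂₂ := by
  obtain ⟨-, P, Q, hPQ⟩ := h
  rw [← fromBlocks_toBlocks A, ← fromBlocks_toBlocks C] at hPQ ⊢
  rw [← fromBlocks_toBlocks P, ← fromBlocks_toBlocks Q, fromBlocks_multiply, fromBlocks_multiply,
    fromBlocks_add, ← fromBlocks_one, fromBlocks_inj] at hPQ
  obtain ⟨y, hy⟩ := hR.exists_isUnit_add_mul_of_unique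
    (x₂ := P.toBlocks₂₁ * A.toBlocks₁₂ + Q.toBlocks₂₁ * C.toBlocks₁₂ + Q.toBlocks₂₂ * C.toBlocks₂₂)
    ⟨P.toBlocks₂₂, 1, by rw [Matrix.one_mul, ← hPQ.2.2.2]; abel⟩
  set X := y * P.toBlocks₂₁
  set s := y * Q.toBlocks₂₁
  -- `Y₀` lives on the last row and column; its corner cancels the cross term `X sᵀ C₂₂` created
  -- by the row operation `X`.
  refine ⟨fromBlocks 0 sᵀ s (y * Q.toBlocks₂₂ - X * sᵀ), X, ?_, ?_⟩
  · rw [fromBlocks_transpose, transpose_transpose, transpose_zero,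
      transpose_eq_self_of_unique (y * Q.toBlocks₂₂ - X * sᵀ)]
  · rw [fromBlocks_multiply, fromBlocks_add, fromBlocks_multiply, toBlocks_fromBlocks₂₂]
    convert hy using 1
    simp only [X, s, Matrix.mul_add, Matrix.sub_mul, Matrix.mul_assoc, Matrix.zero_mul,
      Matrix.one_mul, zero_add]
    abel

theorem exists_symm_isUnit_of_isUnit_toBlocks₂₂
    (ih : ∀ A C : Matrix ι ι R, IsLagrangianPair A C → ∃ Y, Yᵀ = Y ∧ IsUnit (A + Y * C))
    {A C : Matrix (ι ⊕ κ) (ι ⊕ κ) R} (hA : IsUnit A.toBlocks₂₂) (h : IsLagrangianPair A C) :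
    ∃ Y, Yᵀ = Y ∧ IsUnit (A + Y * C) := by
  obtain ⟨A₁, A₂, A₃, A₄, rfl⟩ : ∃ A₁ A₂ A₃ A₄, A = fromBlocks A₁ A₂ A₃ A₄ :=
    ⟨_, _, _, _, (fromBlocks_toBlocks A).symm⟩
  rw [toBlocks_fromBlocks₂₂] at hA
  let := hA.invertible
  have hU : fromBlocks 1 (A₂ * ⅟A₄) 0 1 * fromBlocks 1 (-(A₂ * ⅟A₄)) 0 1 =
      (1 : Matrix (ι ⊕ κ) (ι ⊕ κ) R) := by
    simp [fromBlocks_multiply]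
  have hV : fromBlocks 1 0 (-(⅟A₄ * A₃)) 1 * fromBlocks 1 0 (⅟A₄ * A₃) 1 =
      (1 : Matrix (ι ⊕ κ) (ι ⊕ κ) R) := by
    simp [fromBlocks_multiply]
  have hdiag : fromBlocks 1 (-(A₂ * ⅟A₄)) 0 1 * fromBlocks A₁ A₂ A₃ A₄ *
      fromBlocks 1 0 (-(⅟A₄ * A₃)) 1 = fromBlocks (A₁ - A₂ * ⅟A₄ * A₃) 0 0 A₄ := by
    rw [fromBlocks_eq_of_invertible₂₂ A₁ A₂ A₃ A₄]
    simp [fromBlocks_multiply, Matrix.mul_assoc, sub_eq_add_neg]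
  apply exists_symm_isUnit_of_mul hU hV
  rw [hdiag]
  exact exists_symm_isUnit_of_fromBlocks_zero_zero ih hA (hdiag ▸ h.mul hU hV)

theorem exists_symm_isUnit_of_sum [Unique κ] (hR : HasStableRankOne R)
    (ih : ∀ A C : Matrix ι ι R, IsLagrangianPair A C → ∃ Y, Yᵀ = Y ∧ IsUnit (A + Y * C))
    {A C : Matrix (ι ⊕ κ) (ι ⊕ κ) R} (h : IsLagrangianPair A C) :
    ∃ Y, Yᵀ = Y ∧ IsUnit (A + Y * C) := by
  obtain ⟨Y₀, X, hY₀, hpivot⟩ := h.exists_isUnit_toBlocks₂₂ hR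
  have hX : fromBlocks 1 0 (-X) 1 * fromBlocks 1 0 X 1 = (1 : Matrix (ι ⊕ κ) (ι ⊕ κ) R) := by
    simp [fromBlocks_multiply]
  apply exists_symm_isUnit_of_add_mul hY₀
  apply exists_symm_isUnit_of_mul hX (mul_one 1)
  exact exists_symm_isUnit_of_isUnit_toBlocks₂₂ ih (by rwa [mul_one])
    ((h.add_mul hY₀).mul hX (mul_one 1))

theorem exists_symm_isUnit_of_reindex (e : ι ≃ κ)
    (h : ∀ A C : Matrix ι ι R, IsLagrangianPair A C → ∃ Y, Yᵀ = Y ∧ IsUnit (A + Y * C))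
    {A C : Matrix κ κ R} (hAC : IsLagrangianPair A C) : ∃ Y, Yᵀ = Y ∧ IsUnit (A + Y * C) := by
  set f := reindexRingEquiv R e.symm
  have hf (M : Matrix κ κ R) : (f M)ᵀ = f Mᵀ := rfl
  obtain ⟨hAC, P, Q, hPQ⟩ := hAC
  obtain ⟨Y, hY, hunit⟩ := h (f A) (f C) ⟨by rw [hf, hf, ← map_mul, hAC, map_mul],
    f P, f Q, by rw [← map_mul, ← map_mul, ← map_add, hPQ, map_one]⟩
  refine ⟨f.symm Y, show f.symm Yᵀ = f.symm Y by rw [hY], ?_⟩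
  simpa using hunit.map f.symm

theorem exists_symm_isUnit_add_mul (hR : HasStableRankOne R) {A C : Matrix ι ι R}
    (h : IsLagrangianPair A C) : ∃ Y, Yᵀ = Y ∧ IsUnit (A + Y * C) := by
  suffices hfin : ∀ n, ∀ A C : Matrix (Fin n) (Fin n) R, IsLagrangianPair A C →
      ∃ Y, Yᵀ = Y ∧ IsUnit (A + Y * C) from
    exists_symm_isUnit_of_reindex (Fintype.equivFin ι).symm (hfin _) h
  intro n
  induction n with
  | zero =>
    exact fun A C _ ↦ ⟨0, transpose_zero, Subsingleton.elim 1 (A + 0 * C) ▸ isUnit_one⟩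
  | succ n ih =>
    exact fun A C h ↦ exists_symm_isUnit_of_reindex
      ((Equiv.sumCongr (Equiv.refl _) finOneEquiv.symm).trans finSumFinEquiv)
      (fun A C h ↦ exists_symm_isUnit_of_sum (κ := Unit) hR ih h) h

theorem transpose_mul_invOf_eq_self {A C : Matrix ι ι R} [Invertible A] (hAC : Aᵀ * C = Cᵀ * A) :
    (C * ⅟A)ᵀ = C * ⅟A :=
  calc (C * ⅟A)ᵀ = (⅟A)ᵀ * (Cᵀ * A) * ⅟A := by
        rw [transpose_mul, Matrix.mul_assoc, mul_invOf_cancel_right]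
    _ = C * ⅟A := by
        rw [← hAC, ← Matrix.mul_assoc, ← transpose_mul, mul_invOf_self, transpose_one,
          Matrix.one_mul]

theorem transpose_invOf_mul_eq_self {A B : Matrix ι ι R} [Invertible A] (hAB : A * Bᵀ = B * Aᵀ) :
    (⅟A * B)ᵀ = ⅟A * B :=
  calc (⅟A * B)ᵀ = ⅟A * (A * Bᵀ) * (⅟A)ᵀ := by
        rw [transpose_mul, ← Matrix.mul_assoc (⅟A), invOf_mul_self, Matrix.one_mul]
    _ = ⅟A * B := by
        rw [hAB, Matrix.mul_assoc, Matrix.mul_assoc, ← transpose_mul, invOf_mul_self,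
          transpose_one, Matrix.mul_one]

variable [TopologicalSpace R] [IsTopologicalRing R] [Algebra ℂ R] [ContinuousSMul ℂ R]

theorem fromBlocks_one_one_mem_pathComponentInOne {B : Matrix ι ι R} (hB : Bᵀ = B) :
    fromBlocks 1 B 0 1 ∈ (symplecticGroup ι R).pathComponentInOne := by
  have hmem (z : ℂ) : fromBlocks 1 (z • B) 0 1 ∈ symplecticGroup ι R :=
    SymplecticGroup.fromBlocks_mem_iff.mpr (by simp [hB])
  simpa using Submonoid.mem_pathComponentInOne_of_continuous (by fun_prop) hmem (x₀ := 0)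
    (by simp) 1

theorem fromBlocks_one_zero_mem_pathComponentInOne {B : Matrix ι ι R} (hB : Bᵀ = B) :
    fromBlocks 1 0 B 1 ∈ (symplecticGroup ι R).pathComponentInOne := by
  have hmem (z : ℂ) : fromBlocks 1 0 (z • B) 1 ∈ symplecticGroup ι R :=
    SymplecticGroup.fromBlocks_mem_iff.mpr (by simp [hB])
  simpa using Submonoid.mem_pathComponentInOne_of_continuous (by fun_prop) hmem (x₀ := 0)
    (by simp) 1

theorem fromBlocks_unipotent_mem_pathComponentInOne {N : Matrix ι ι R} (hN : N * N = 0) :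
    fromBlocks (1 + N) 0 0 (1 - Nᵀ) ∈ (symplecticGroup ι R).pathComponentInOne := by
  have hmem (z : ℂ) : fromBlocks (1 + z • N) 0 0 (1 - z • Nᵀ) ∈ symplecticGroup ι R := by
    refine SymplecticGroup.fromBlocks_mem_iff.mpr ⟨by simp, by simp, ?_⟩
    have hN' : (z • Nᵀ) * (z • Nᵀ) = 0 := by
      rw [smul_mul_smul_comm, ← transpose_mul, hN, transpose_zero, smul_zero]
    simp only [transpose_add, transpose_one, transpose_smul, transpose_zero, zero_mul, sub_zero]
    generalize z • Nᵀ = M at hN' ⊢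
    calc (1 + M) * (1 - M) = 1 - M * M := by noncomm_ring
      _ = 1 := by rw [hN', sub_zero]
  simpa using Submonoid.mem_pathComponentInOne_of_continuous (by fun_prop) hmem (x₀ := 0)
    (by simp) 1

theorem fromBlocks_symm_mem_pathComponentInOne {Δ Δ' : Matrix ι ι R} (hΔ : Δᵀ = Δ)
    (h : Δ * Δ' = 1) : fromBlocks Δ 0 0 Δ' ∈ (symplecticGroup ι R).pathComponentInOne := by
  have h' : Δ' * Δ = 1 := mul_eq_one_comm.mp h
  have hΔ' : Δ'ᵀ = Δ' := by
    calc Δ'ᵀ = Δ'ᵀ * (Δ * Δ') := by rw [h, mul_one]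
      _ = (Δ * Δ')ᵀ * Δ' := by rw [transpose_mul, hΔ, mul_assoc]
      _ = Δ' := by rw [h, transpose_one, one_mul]
  have hwhitehead : fromBlocks Δ 0 0 Δ' =
      fromBlocks 1 Δ 0 1 * fromBlocks 1 0 (-Δ') 1 * fromBlocks 1 Δ 0 1 *
        (fromBlocks 1 (-1) 0 1 * fromBlocks 1 0 1 1 * fromBlocks 1 (-1) 0 1) := by
    simp [fromBlocks_multiply, h, h']
  have hneg {B : Matrix ι ι R} (hB : Bᵀ = B) : (-B)ᵀ = -B := by rw [transpose_neg, hB]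
  rw [hwhitehead]
  have hE {B : Matrix ι ι R} (hB : Bᵀ = B) := fromBlocks_one_one_mem_pathComponentInOne hB
  have hF {B : Matrix ι ι R} (hB : Bᵀ = B) := fromBlocks_one_zero_mem_pathComponentInOne hB
  exact mul_mem (mul_mem (mul_mem (hE hΔ) (hF (hneg hΔ'))) (hE hΔ))
    (mul_mem (mul_mem (hE (hneg transpose_one)) (hF transpose_one)) (hE (hneg transpose_one)))

variable (ι R) in
def hyperbolicPreimage : Submonoid (Matrix ι ι R) where
  carrier := {A | ∃ V, Aᵀ * V = 1 ∧
    fromBlocks A 0 0 V ∈ (symplecticGroup ι R).pathComponentInOne}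
  mul_mem' := by
    rintro A B ⟨V, hAV, hA⟩ ⟨W, hBW, hB⟩
    refine ⟨V * W, ?_, ?_⟩
    · rw [transpose_mul, mul_assoc, ← mul_assoc Aᵀ, hAV, one_mul, hBW]
    · simpa [fromBlocks_multiply] using mul_mem hA hB
  one_mem' := ⟨1, by simp, by simp⟩

theorem closure_unipotentsAndSymmetricUnits_le :
    Submonoid.closure (unipotentsAndSymmetricUnits ι R) ≤ hyperbolicPreimage ι R := by
  rw [Submonoid.closure_le]
  rintro A (hA | ⟨hA, hAt⟩)
  · obtain ⟨N, rfl⟩ : ∃ N, A = 1 + N := ⟨A - 1, by abel⟩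
    have hN : N * N = 0 := by simpa using hA
    refine ⟨1 - Nᵀ, ?_, fromBlocks_unipotent_mem_pathComponentInOne hN⟩
    have hNt : Nᵀ * Nᵀ = 0 := by rw [← transpose_mul, hN, transpose_zero]
    calc (1 + N)ᵀ * (1 - Nᵀ) = 1 - Nᵀ * Nᵀ := by rw [transpose_add, transpose_one]; noncomm_ring
      _ = 1 := by rw [hNt, sub_zero]
  · have hinv : A * A⁻¹ = 1 := mul_nonsing_inv A ((isUnit_iff_isUnit_det A).mp hA)
    exact ⟨A⁻¹, by rw [hAt, hinv], fromBlocks_symm_mem_pathComponentInOne hAt hinv⟩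

theorem mem_pathComponentInOne_of_isUnit_toBlocks₁₁ (hR : HasStableRankOne R)
    {M : Matrix (ι ⊕ ι) (ι ⊕ ι) R} (hM : M ∈ symplecticGroup ι R) (hA : IsUnit M.toBlocks₁₁) :
    M ∈ (symplecticGroup ι R).pathComponentInOne := by
  obtain ⟨A, B, C, D, rfl⟩ : ∃ A B C D, M = fromBlocks A B C D :=
    ⟨_, _, _, _, (fromBlocks_toBlocks M).symm⟩
  rw [toBlocks_fromBlocks₁₁] at hA
  let := hA.invertible
  obtain ⟨hAC, -, hAD⟩ := SymplecticGroup.fromBlocks_mem_iff.mp hM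
  have hAB : A * Bᵀ = B * Aᵀ := by
    have hMt := SymplecticGroup.transpose_mem hM
    rw [fromBlocks_transpose] at hMt
    simpa using (SymplecticGroup.fromBlocks_mem_iff.mp hMt).1
  obtain ⟨V, hAV, hdiag⟩ : A ∈ hyperbolicPreimage ι R :=
    closure_unipotentsAndSymmetricUnits_le (mem_closure_unipotentsAndSymmetricUnits_of_isUnit hR hA)
  have hV : V = D - C * ⅟A * B := by
    refine ((isUnit_transpose A).mpr hA).mul_left_cancel ?_
    rw [hAV, Matrix.mul_sub, ← hAD, ← Matrix.mul_assoc, ← Matrix.mul_assoc, hAC,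
      Matrix.mul_invOf_cancel_right]
  rw [fromBlocks_eq_of_invertible₁₁, ← hV]
  exact mul_mem
    (mul_mem (fromBlocks_one_zero_mem_pathComponentInOne (transpose_mul_invOf_eq_self hAC)) hdiag)
    (fromBlocks_one_one_mem_pathComponentInOne (transpose_invOf_mul_eq_self hAB))

theorem mem_pathComponentInOne_of_mem_symplecticGroup (hR : HasStableRankOne R)
    {M : Matrix (ι ⊕ ι) (ι ⊕ ι) R} (hM : M ∈ symplecticGroup ι R) :
    M ∈ (symplecticGroup ι R).pathComponentInOne := by
  obtain ⟨A, B, C, D, rfl⟩ : ∃ A B C D, M = fromBlocks A B C D :=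
    ⟨_, _, _, _, (fromBlocks_toBlocks M).symm⟩
  obtain ⟨hAC, -, hAD⟩ := SymplecticGroup.fromBlocks_mem_iff.mp hM
  obtain ⟨Y, hY, hunit⟩ := exists_symm_isUnit_add_mul hR ⟨hAC, Dᵀ, -Bᵀ, by
    rw [Matrix.neg_mul, ← sub_eq_add_neg, ← transpose_transpose A, ← transpose_transpose C,
      ← transpose_mul, ← transpose_mul, ← transpose_sub, hAD, transpose_one]⟩
  have hEY : fromBlocks 1 Y 0 1 * fromBlocks A B C D =
      fromBlocks (A + Y * C) (B + Y * D) C D := by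
    simp [fromBlocks_multiply]
  have hsplit : fromBlocks A B C D =
      fromBlocks 1 (-Y) 0 1 * (fromBlocks 1 Y 0 1 * fromBlocks A B C D) := by
    rw [← mul_assoc]
    simp [fromBlocks_multiply]
  rw [hsplit]
  refine mul_mem (fromBlocks_one_one_mem_pathComponentInOne (by rw [transpose_neg, hY])) ?_
  refine mem_pathComponentInOne_of_isUnit_toBlocks₁₁ hR
    (mul_mem (SymplecticGroup.fromBlocks_mem_iff.mpr (by simp [hY])) hM) ?_
  rwa [hEY, toBlocks_fromBlocks₁₁]

end Matrix

theorem isSymplectic_iff_mem_symplecticGroup {R : Type*} [CommRing R] {n : ℕ}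
    {M : Matrix (Idx n) (Idx n) R} : IsSymplectic M ↔ M ∈ symplecticGroup (Fin n) R := by
  have hJ : Jmat R n = -J (Fin n) R := by simp [Jmat, J, fromBlocks_neg]
  rw [SymplecticGroup.mem_iff', IsSymplectic, hJ, Matrix.mul_neg, Matrix.neg_mul, neg_inj]

theorem stmt19_general {R : Type*} [NormedCommRing R] [NormedAlgebra ℂ R] {n : ℕ}
    (hbsr : ∀ x₁ x₂ : R, (∃ r s : R, r * x₁ + s * x₂ = 1) → ∃ y : R, IsUnit (x₁ + y * x₂))
    (M : Matrix (Idx n) (Idx n) R) (hM : IsSymplectic M) :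
    ∃ γ : ℝ → Matrix (Idx n) (Idx n) R,
      ContinuousOn γ (Set.Icc 0 1) ∧
      (∀ t ∈ Set.Icc (0 : ℝ) 1, IsSymplectic (γ t)) ∧
      γ 0 = 1 ∧ γ 1 = M := by
  obtain ⟨γ, hγ⟩ := mem_pathComponentInOne_of_mem_symplecticGroup hbsr
    (isSymplectic_iff_mem_symplecticGroup.mp hM)
  refine ⟨γ.extend, γ.continuous_extend.continuousOn, fun t ht ↦ ?_, γ.extend_zero, γ.extend_one⟩
  rw [γ.extend_apply ht]
  exact isSymplectic_iff_mem_symplecticGroup.mpr (hγ _)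

/-- If `R` is a commutative Banach algebra of Bass stable rank one, every symplectic matrix
over `R` is connected to the identity by a continuous path inside `Sp_{2n}(R)`. -/
theorem stmt19 {R : Type*} [NormedCommRing R] [NormedAlgebra ℂ R] [CompleteSpace R] {n : ℕ}
    (hbsr : ∀ x₁ x₂ : R, (∃ r s : R, r * x₁ + s * x₂ = 1) → ∃ y : R, IsUnit (x₁ + y * x₂))
    (M : Matrix (Idx n) (Idx n) R) (hM : IsSymplectic M) :
    ∃ γ : ℝ → Matrix (Idx n) (Idx n) R,
      ContinuousOn γ (Set.Icc 0 1) ∧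
      (∀ t ∈ Set.Icc (0 : ℝ) 1, IsSymplectic (γ t)) ∧
      γ 0 = 1 ∧ γ 1 = M :=
  stmt19_general hbsr M hM
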